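/- arXiv:2508.11635 — 2 statements merged into one kernel-verified Lean document; each statement's English description precedes it below -/
import Mathlib

section
/- There exists a partial computable function f : ℕ →. ℕ taking only the values 0 and 1 (on its domain) that admits no total computable extension: there is no computable g : ℕ → ℕ such that g(x) = f(x) for every x in the domain of f. -/
/-! Diagonalization: with `φₙ` the `n`-th partial computable function, `f n := 1 - φₙ(n)` is
partial computable with values in `{0, 1}`. A total computable `g` is some `φₙ`, and then
`f n` is defined and differs from `g n = φₙ(n)`. -/

namespace Nat.Partrec.Code

def diagonal (h : ℕ → ℕ) : ℕ →. ℕ := fun n => (eval (Denumerable.ofNat Code n) n).map h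

theorem diagonal_partrec {h : ℕ → ℕ} (hh : Computable h) : Nat.Partrec (diagonal h) :=
  Partrec.nat_iff.1 <|
    (eval_part.comp (Computable.ofNat Code) Computable.id).map (hh.comp Computable.snd).to₂

theorem mem_diagonal_iff {h : ℕ → ℕ} {n v : ℕ} :
    v ∈ diagonal h n ↔ ∃ m ∈ eval (Denumerable.ofNat Code n) n, h m = v :=
  Part.mem_map_iff h

theorem exists_index_of_computable {g : ℕ → ℕ} (hg : Computable g) :
    ∃ n, eval (Denumerable.ofNat Code n) = fun x => Part.some (g x) := by
  obtain ⟨c, hc⟩ := exists_code.1 (Partrec.nat_iff.1 hg.partrec)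
  exact ⟨Encodable.encode c, by rw [Denumerable.ofNat_encode, hc]; rfl⟩

theorem not_extends_diagonal {h g : ℕ → ℕ} (hh : ∀ m, h m ≠ m) (hg : Computable g) :
    ¬∀ x v, v ∈ diagonal h x → g x = v := by
  intro hext
  obtain ⟨n, hn⟩ := exists_index_of_computable hg
  have hmem : h (g n) ∈ diagonal h n :=
    mem_diagonal_iff.2 ⟨g n, by rw [hn]; exact Part.mem_some _, rfl⟩
  exact hh (g n) (hext n _ hmem).symm

end Nat.Partrec.Code

open Nat.Partrec.Code

theorem exists_unextendible_partial_computable :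
    ∃ f : ℕ →. ℕ, Nat.Partrec f ∧
      (∀ x v, v ∈ f x → v = 0 ∨ v = 1) ∧
      ¬∃ g : ℕ → ℕ, Computable g ∧ ∀ x v, v ∈ f x → g x = v := by
  -- truncated subtraction: `1 - m` is `1` at `m = 0` and `0` elsewhere, so it has no fixed point
  refine ⟨diagonal (1 - ·), diagonal_partrec (Primrec.nat_sub.comp (.const 1) .id).to_comp,
    fun x v hv => ?_, fun ⟨g, hg, hext⟩ => not_extends_diagonal (fun m => by omega) hg hext⟩
  obtain ⟨m, -, rfl⟩ := mem_diagonal_iff.1 hv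
  omega
end

section
/- There exist two disjoint computably enumerable subsets A, B of ℕ that are computably inseparable: there is no computable function h : ℕ → ℕ such that h(x) = 0 for all x ∈ A and h(x) = 1 for all x ∈ B. -/
/-!
Let `φ n` be the value of the `n`-th partial computable function at `n`, and take
`A = {n | φ n ≠ 0}` and `B = {n | φ n = 0}` (both requiring `φ n` to be defined). If a computable
`h` were `0` on `A` and `1` on `B`, then at an index `e` of `h` we would have `φ e = h e`, so
`h e = 0` puts `e` in `B` and `h e ≠ 0` puts `e` in `A`, a contradiction either way.
-/

theorem Partrec.rePred_exists_mem {α β : Type*} [Primcodable α] [Primcodable β] {f : α →. β}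
    (hf : Partrec f) {p : β → Prop} (hp : REPred p) : REPred fun a => ∃ b ∈ f a, p b :=
  (hf.bind (hp.comp Computable.snd).to₂).dom_re.of_eq fun a => by
    simp [Part.dom_iff_mem, Part.mem_bind_iff]

theorem REPred.exists_nat_partrec_dom {p : ℕ → Prop} (hp : REPred p) :
    ∃ f : ℕ →. ℕ, Nat.Partrec f ∧ {n | p n} = {n | (f n).Dom} :=
  ⟨_, Partrec.nat_iff.1 (hp.map (Computable.const 0).to₂), by ext; simp [Part.dom_iff_mem]⟩

theorem disjoint_exists_mem_and_exists_mem_not {α β : Type*} (f : α →. β) (p : β → Prop) :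
    Disjoint {a | ∃ b ∈ f a, p b} {a | ∃ b ∈ f a, ¬p b} := by
  rw [Set.disjoint_left]
  rintro a ⟨b, hb, hpb⟩ ⟨b', hb', hpb'⟩
  exact hpb' (Part.mem_unique hb hb' ▸ hpb)

namespace Nat.Partrec.Code

def evalDiag (n : ℕ) : Part ℕ := (Denumerable.ofNat Code n).eval n

theorem partrec_evalDiag : Partrec evalDiag :=
  eval_part.comp (Computable.ofNat Code) Computable.id

theorem exists_evalDiag_eq_some {h : ℕ → ℕ} (hh : Computable h) :
    ∃ n, evalDiag n = Part.some (h n) := by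
  obtain ⟨c, hc⟩ := exists_code.1 (Partrec.nat_iff.1 hh.partrec)
  exact ⟨Encodable.encode c, by simp [evalDiag, hc]⟩

end Nat.Partrec.Code

open Nat.Partrec.Code

theorem exists_computably_inseparable_ce_sets :
    ∃ A B : Set ℕ,
      (∃ f : ℕ →. ℕ, Nat.Partrec f ∧ A = {x | (f x).Dom}) ∧
      (∃ f : ℕ →. ℕ, Nat.Partrec f ∧ B = {x | (f x).Dom}) ∧
      Disjoint A B ∧
      ¬∃ h : ℕ → ℕ, Computable h ∧ (∀ x ∈ A, h x = 0) ∧ (∀ x ∈ B, h x = 1) := by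
  have isZero : ComputablePred fun y : ℕ => y = 0 :=
    (Primrec.eq.comp Primrec.id (Primrec.const 0)).computablePred
  refine ⟨{n | ∃ y ∈ evalDiag n, ¬y = 0}, {n | ∃ y ∈ evalDiag n, y = 0},
    (partrec_evalDiag.rePred_exists_mem isZero.not.to_re).exists_nat_partrec_dom,
    (partrec_evalDiag.rePred_exists_mem isZero.to_re).exists_nat_partrec_dom,
    (disjoint_exists_mem_and_exists_mem_not evalDiag _).symm, ?_⟩
  rintro ⟨h, hh, hA, hB⟩
  obtain ⟨e, he⟩ := exists_evalDiag_eq_some hh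
  have mem : h e ∈ evalDiag e := he ▸ Part.mem_some _
  by_cases hz : h e = 0
  · exact absurd (hB e ⟨_, mem, hz⟩) (by omega)
  · exact hz (hA e ⟨_, mem, hz⟩)
end
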